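/- Suppose there exist i, j, g, h ∈ {1,2,3} such that (i) the additive subgroup of G generated by { aᵢ − aⱼ, b_g − b_h } is all of G, and (ii) addOrder(aᵢ − aⱼ) · addOrder(b_g − b_h) = ℓm. Set μ = addOrder(aᵢ − aⱼ) and λ = addOrder(b_g − b_h). Then QC(A,B) has a toric layout: there exists a bijection φ from ZMod 2μ × ZMod 2λ to the vertex set {L,R,X,Z} × G of the Tanner graph such that whenever u and v are adjacent in the Cayley graph of ZMod 2μ × ZMod 2λ, the vertices φ(u) and φ(v) are adjacent in the Tanner graph of QC(A,B). -/

import Mathlib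

/-- The four kinds of vertices in the Tanner graph of a bivariate bicycle code:
left data qubits, right data qubits, X-checks and Z-checks. -/
inductive Kind | L | R | X | Z
deriving DecidableEq

/-- Base adjacency relation of the Tanner graph of `QC(A,B)`: for every `g` and every
`i ∈ {1,2,3}`, `(X, g)` is adjacent to `(L, g + aᵢ)` and `(R, g + bᵢ)`, while `(Z, g)` is
adjacent to `(L, g - bᵢ)` and `(R, g - aᵢ)`. -/
def tadj {G : Type*} [AddCommGroup G] (a b : Fin 3 → G) (u v : Kind × G) : Prop :=
  (∃ i, u.1 = Kind.X ∧ v.1 = Kind.L ∧ v.2 = u.2 + a i) ∨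
  (∃ i, u.1 = Kind.X ∧ v.1 = Kind.R ∧ v.2 = u.2 + b i) ∨
  (∃ i, u.1 = Kind.Z ∧ v.1 = Kind.L ∧ v.2 = u.2 - b i) ∨
  (∃ i, u.1 = Kind.Z ∧ v.1 = Kind.R ∧ v.2 = u.2 - a i)

/-- The Tanner graph of the bivariate bicycle code `QC(A,B)` specified by exponent
vectors `a₁,a₂,a₃` and `b₁,b₂,b₃`. -/
def tanner {G : Type*} [AddCommGroup G] (a b : Fin 3 → G) : SimpleGraph (Kind × G) where
  Adj u v := tadj a b u v ∨ tadj a b v u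
  symm := ⟨fun _ _ h => h.symm⟩
  loopless := by
    constructor
    rintro ⟨k, g⟩ h
    rcases h with h | h <;>
      rcases h with ⟨i, h1, h2, _⟩ | ⟨i, h1, h2, _⟩ | ⟨i, h1, h2, _⟩ | ⟨i, h1, h2, _⟩ <;>
      simp_all


/-- The Cayley graph of `ZMod p × ZMod q` generated by `{(1,0), (0,1)}`: distinct `u, v`
are adjacent iff `u - v ∈ {(1,0), (-1,0), (0,1), (0,-1)}`. -/
def cayley (p q : ℕ) : SimpleGraph (ZMod p × ZMod q) where
  Adj u v := u ≠ v ∧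
    (u - v = (1, 0) ∨ u - v = (-1, 0) ∨ u - v = (0, 1) ∨ u - v = (0, -1))
  symm := by
    constructor
    rintro u v ⟨hne, h⟩
    refine ⟨hne.symm, ?_⟩
    have hvu : v - u = -(u - v) := (neg_sub u v).symm
    rcases h with h | h | h | h
    · exact Or.inr (Or.inl (by rw [hvu, h]; simp [Prod.ext_iff]))
    · exact Or.inl (by rw [hvu, h]; simp [Prod.ext_iff])
    · exact Or.inr (Or.inr (Or.inr (by rw [hvu, h]; simp [Prod.ext_iff])))
    · exact Or.inr (Or.inr (Or.inl (by rw [hvu, h]; simp [Prod.ext_iff])))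
  loopless := ⟨fun _ h => h.1 rfl⟩

namespace ToricAux

instance : Fintype Kind :=
  ⟨⟨{Kind.L, Kind.R, Kind.X, Kind.Z}, by decide⟩, fun x => by cases x <;> decide⟩

lemma card_kind : Fintype.card Kind = 4 := rfl

variable {G : Type*} [AddCommGroup G]

/-- The explicit toric layout map on integer coordinates. -/
def Fmap (α β ai bg : G) (x y : ℤ) : Kind × G :=
  (if x % 2 = 0 then (if y % 2 = 0 then Kind.X else Kind.R)
   else if y % 2 = 0 then Kind.L else Kind.Z,
   (x / 2) • α + (y / 2) • β + (x % 2) • ai + (y % 2) • bg)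

lemma Fmap_congr (α β ai bg : G) {p q : ℕ} (hpα : (p : ℤ) • α = 0) (hqβ : (q : ℤ) • β = 0)
    {x x' y y' : ℤ} (hx : ((2 * p : ℕ) : ℤ) ∣ x - x') (hy : ((2 * q : ℕ) : ℤ) ∣ y - y') :
    Fmap α β ai bg x y = Fmap α β ai bg x' y' := by
  obtain ⟨k, hk⟩ := hx
  obtain ⟨l, hl⟩ := hy
  push_cast at hk hl
  obtain ⟨K, hK1, hK2⟩ : ∃ K : ℤ, x = x' + 2 * K ∧ K • α = 0 :=
    ⟨(p : ℤ) * k, by linarith, by rw [mul_comm, mul_zsmul, hpα, smul_zero]⟩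
  obtain ⟨M, hM1, hM2⟩ : ∃ M : ℤ, y = y' + 2 * M ∧ M • β = 0 :=
    ⟨(q : ℤ) * l, by linarith, by rw [mul_comm, mul_zsmul, hqβ, smul_zero]⟩
  have hx2 : x % 2 = x' % 2 := by omega
  have hy2 : y % 2 = y' % 2 := by omega
  have hxd : x / 2 = x' / 2 + K := by omega
  have hyd : y / 2 = y' / 2 + M := by omega
  unfold Fmap
  rw [hx2, hy2, hxd, hyd, add_zsmul, add_zsmul, hK2, hM2]
  simp [add_assoc, add_comm, add_left_comm]

lemma Fmap_adj_right (a b : Fin 3 → G) (i j g h : Fin 3) (x y : ℤ) :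
    (tanner a b).Adj (Fmap (a i - a j) (b g - b h) (a i) (b g) (x + 1) y)
      (Fmap (a i - a j) (b g - b h) (a i) (b g) x y) := by
  rcases Int.emod_two_eq x with hx | hx <;> rcases Int.emod_two_eq y with hy | hy
  · have h1 : (x + 1) % 2 = 1 := by omega
    have h2 : (x + 1) / 2 = x / 2 := by omega
    exact Or.inr (Or.inl ⟨i, by simp [Fmap, hx, hy, h1], by simp [Fmap, hx, hy, h1],
      by simp only [Fmap, hx, hy, h1, h2, one_zsmul, zero_zsmul]; abel⟩)
  · have h1 : (x + 1) % 2 = 1 := by omega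
    have h2 : (x + 1) / 2 = x / 2 := by omega
    exact Or.inl (Or.inr (Or.inr (Or.inr ⟨i, by simp [Fmap, hx, hy, h1],
      by simp [Fmap, hx, hy, h1],
      by simp only [Fmap, hx, hy, h1, h2, one_zsmul, zero_zsmul]; abel⟩)))
  · have h1 : (x + 1) % 2 = 0 := by omega
    have h2 : (x + 1) / 2 = x / 2 + 1 := by omega
    exact Or.inl (Or.inl ⟨j, by simp [Fmap, hx, hy, h1], by simp [Fmap, hx, hy, h1],
      by simp only [Fmap, hx, hy, h1, h2, one_zsmul, zero_zsmul, add_zsmul]; abel⟩)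
  · have h1 : (x + 1) % 2 = 0 := by omega
    have h2 : (x + 1) / 2 = x / 2 + 1 := by omega
    exact Or.inr (Or.inr (Or.inr (Or.inr ⟨j, by simp [Fmap, hx, hy, h1],
      by simp [Fmap, hx, hy, h1],
      by simp only [Fmap, hx, hy, h1, h2, one_zsmul, zero_zsmul, add_zsmul]; abel⟩)))

lemma Fmap_adj_up (a b : Fin 3 → G) (i j g h : Fin 3) (x y : ℤ) :
    (tanner a b).Adj (Fmap (a i - a j) (b g - b h) (a i) (b g) x (y + 1))
      (Fmap (a i - a j) (b g - b h) (a i) (b g) x y) := by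
  rcases Int.emod_two_eq x with hx | hx <;> rcases Int.emod_two_eq y with hy | hy
  · have h1 : (y + 1) % 2 = 1 := by omega
    have h2 : (y + 1) / 2 = y / 2 := by omega
    exact Or.inr (Or.inr (Or.inl ⟨g, by simp [Fmap, hx, hy, h1], by simp [Fmap, hx, hy, h1],
      by simp only [Fmap, hx, hy, h1, h2, one_zsmul, zero_zsmul]; abel⟩))
  · have h1 : (y + 1) % 2 = 0 := by omega
    have h2 : (y + 1) / 2 = y / 2 + 1 := by omega
    exact Or.inl (Or.inr (Or.inl ⟨h, by simp [Fmap, hx, hy, h1], by simp [Fmap, hx, hy, h1],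
      by simp only [Fmap, hx, hy, h1, h2, one_zsmul, zero_zsmul, add_zsmul]; abel⟩))
  · have h1 : (y + 1) % 2 = 1 := by omega
    have h2 : (y + 1) / 2 = y / 2 := by omega
    exact Or.inl (Or.inr (Or.inr (Or.inl ⟨g, by simp [Fmap, hx, hy, h1],
      by simp [Fmap, hx, hy, h1],
      by simp only [Fmap, hx, hy, h1, h2, one_zsmul, zero_zsmul]; abel⟩)))
  · have h1 : (y + 1) % 2 = 0 := by omega
    have h2 : (y + 1) / 2 = y / 2 + 1 := by omega
    exact Or.inr (Or.inr (Or.inr (Or.inl ⟨h, by simp [Fmap, hx, hy, h1],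
      by simp [Fmap, hx, hy, h1],
      by simp only [Fmap, hx, hy, h1, h2, one_zsmul, zero_zsmul, add_zsmul]; abel⟩)))

lemma Fmap_inj (α β ai bg : G) {p q : ℕ}
    (hker : ∀ s t : ℤ, s • α + t • β = 0 → (p : ℤ) ∣ s ∧ (q : ℤ) ∣ t)
    {x x' y y' : ℤ} (hx0 : 0 ≤ x) (hx1 : x < 2 * p) (hx0' : 0 ≤ x') (hx1' : x' < 2 * p)
    (hy0 : 0 ≤ y) (hy1 : y < 2 * q) (hy0' : 0 ≤ y') (hy1' : y' < 2 * q)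
    (heq : Fmap α β ai bg x y = Fmap α β ai bg x' y') : x = x' ∧ y = y' := by
  rw [Fmap, Fmap, Prod.mk.injEq] at heq
  obtain ⟨hk, hv⟩ := heq
  have hpar : x % 2 = x' % 2 ∧ y % 2 = y' % 2 := by
    rcases Int.emod_two_eq x with h1 | h1 <;> rcases Int.emod_two_eq x' with h2 | h2 <;>
      rcases Int.emod_two_eq y with h3 | h3 <;> rcases Int.emod_two_eq y' with h4 | h4 <;>
      simp only [h1, h2, h3, h4] at hk ⊢ <;> simp_all <;> omega
  rw [hpar.1, hpar.2] at hv
  have h5 : (x / 2) • α + (y / 2) • β = (x' / 2) • α + (y' / 2) • β :=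
    add_right_cancel (add_right_cancel hv)
  have h6 : (x / 2 - x' / 2) • α + (y / 2 - y' / 2) • β = 0 := by
    have h7 := sub_eq_zero_of_eq h5
    rw [← h7]; module
  obtain ⟨hd1, hd2⟩ := hker _ _ h6
  have e1 : x / 2 - x' / 2 = 0 :=
    Int.eq_zero_of_abs_lt_dvd hd1 (abs_lt.mpr ⟨by omega, by omega⟩)
  have e2 : y / 2 - y' / 2 = 0 :=
    Int.eq_zero_of_abs_lt_dvd hd2 (abs_lt.mpr ⟨by omega, by omega⟩)
  omega

theorem toric {G : Type*} [AddCommGroup G] [Fintype G] [DecidableEq G]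
    (a b : Fin 3 → G) (i j g h : Fin 3)
    (hgen : AddSubgroup.closure ({a i - a j, b g - b h} : Set G) = ⊤)
    (hord : addOrderOf (a i - a j) * addOrderOf (b g - b h) = Fintype.card G) :
    ∃ φ : ZMod (2 * addOrderOf (a i - a j)) × ZMod (2 * addOrderOf (b g - b h)) ≃ Kind × G,
      ∀ u v, (cayley (2 * addOrderOf (a i - a j)) (2 * addOrderOf (b g - b h))).Adj u v →
        (tanner a b).Adj (φ u) (φ v) := by
  set α := a i - a j with hα
  set β := b g - b h with hβ
  set p := addOrderOf α with hp
  set q := addOrderOf β with hq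
  have hp0 : 0 < p := addOrderOf_pos α
  have hq0 : 0 < q := addOrderOf_pos β
  haveI : NeZero p := ⟨hp0.ne'⟩
  haveI : NeZero q := ⟨hq0.ne'⟩
  haveI : NeZero (2 * p) := ⟨by omega⟩
  haveI : NeZero (2 * q) := ⟨by omega⟩
  have hpα : (p : ℤ) • α = 0 := by
    rw [natCast_zsmul, hp, addOrderOf_nsmul_eq_zero]
  have hqβ : (q : ℤ) • β = 0 := by
    rw [natCast_zsmul, hq, addOrderOf_nsmul_eq_zero]
  -- reduction of integer scalars mod n
  have hred : ∀ (n : ℕ) [NeZero n] (v : G), (n : ℤ) • v = 0 →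
      ∀ s : ℤ, (((s : ZMod n).val : ℤ)) • v = s • v := by
    intro n _ v hv s
    have hdvd : (n : ℤ) ∣ s - ((s : ZMod n).val : ℤ) := by
      rw [← ZMod.intCast_zmod_eq_zero_iff_dvd]
      push_cast [ZMod.natCast_val, ZMod.cast_id]
      ring
    obtain ⟨k, hk⟩ := hdvd
    have hs : s = ((s : ZMod n).val : ℤ) + n * k := by linarith
    conv_rhs => rw [hs]
    rw [add_zsmul, mul_comm, mul_zsmul, hv, smul_zero, add_zero]
  -- the isomorphism ZMod p × ZMod q → G
  set ψ0 : ZMod p × ZMod q → G := fun st => (st.1.val : ℤ) • α + (st.2.val : ℤ) • β with hψ0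
  have hsurj : Function.Surjective ψ0 := by
    intro w
    have hw : w ∈ AddSubgroup.closure ({α, β} : Set G) := hgen ▸ AddSubgroup.mem_top w
    rw [AddSubgroup.mem_closure_pair] at hw
    obtain ⟨s, t, hst⟩ := hw
    exact ⟨((s : ZMod p), (t : ZMod q)), by
      simp only [hψ0]
      rw [hred p α hpα s, hred q β hqβ t]; exact hst⟩
  have hbij : Function.Bijective ψ0 :=
    (Fintype.bijective_iff_surjective_and_card ψ0).2
      ⟨hsurj, by simp [ZMod.card, hord]⟩
  have hker : ∀ s t : ℤ, s • α + t • β = 0 → (p : ℤ) ∣ s ∧ (q : ℤ) ∣ t := by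
    intro s t hst
    have h0 : ψ0 ((s : ZMod p), (t : ZMod q)) = ψ0 (0, 0) := by
      simp only [hψ0]
      rw [hred p α hpα s, hred q β hqβ t]
      simp [hst]
    have h1 := hbij.1 h0
    rw [Prod.mk.injEq] at h1
    exact ⟨(ZMod.intCast_zmod_eq_zero_iff_dvd s p).1 h1.1,
      (ZMod.intCast_zmod_eq_zero_iff_dvd t q).1 h1.2⟩
  -- the layout map
  set φ₀ : ZMod (2 * p) × ZMod (2 * q) → Kind × G :=
    fun u => Fmap α β (a i) (b g) (u.1.val : ℤ) (u.2.val : ℤ) with hφ₀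
  have hvdvd : ∀ (n : ℕ) [NeZero n] (s : ℤ), ((n : ℕ) : ℤ) ∣ (((s : ZMod n).val : ℤ) - s) := by
    intro n _ s
    rw [← ZMod.intCast_zmod_eq_zero_iff_dvd]
    push_cast [ZMod.natCast_val, ZMod.cast_id]
    ring
  have hφ : ∀ x y : ℤ, φ₀ (((x : ℤ) : ZMod (2 * p)), ((y : ℤ) : ZMod (2 * q))) =
      Fmap α β (a i) (b g) x y := by
    intro x y
    exact Fmap_congr α β (a i) (b g) hpα hqβ (hvdvd (2 * p) x) (hvdvd (2 * q) y)
  have hinj : Function.Injective φ₀ := by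
    intro u v huv
    have h1 := Fmap_inj α β (a i) (b g) hker
      (Int.natCast_nonneg _) (by exact_mod_cast ZMod.val_lt u.1)
      (Int.natCast_nonneg _) (by exact_mod_cast ZMod.val_lt v.1)
      (Int.natCast_nonneg _) (by exact_mod_cast ZMod.val_lt u.2)
      (Int.natCast_nonneg _) (by exact_mod_cast ZMod.val_lt v.2) huv
    have e1 : u.1.val = v.1.val := by exact_mod_cast h1.1
    have e2 : u.2.val = v.2.val := by exact_mod_cast h1.2
    exact Prod.ext (ZMod.val_injective _ e1) (ZMod.val_injective _ e2)
  have hb : Function.Bijective φ₀ :=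
    (Fintype.bijective_iff_injective_and_card φ₀).2
      ⟨hinj, by simp [ZMod.card, card_kind, ← hord]; ring⟩
  refine ⟨Equiv.ofBijective φ₀ hb, ?_⟩
  have hself : ∀ v : ZMod (2 * p) × ZMod (2 * q),
      v = (((v.1.val : ℤ) : ZMod (2 * p)), ((v.2.val : ℤ) : ZMod (2 * q))) := by
    intro v
    apply Prod.ext <;> push_cast <;> simp [ZMod.natCast_val, ZMod.cast_id]
  have key1 : ∀ u v : ZMod (2 * p) × ZMod (2 * q), u - v = (1, 0) →
      (tanner a b).Adj (φ₀ u) (φ₀ v) := by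
    intro u v huv
    have hadj := Fmap_adj_right a b i j g h (v.1.val : ℤ) (v.2.val : ℤ)
    rw [← hφ, ← hφ] at hadj
    have hu : u = ((((v.1.val : ℤ) + 1 : ℤ) : ZMod (2 * p)), ((v.2.val : ℤ) : ZMod (2 * q))) := by
      have h9 : u = v + (1, 0) := by rw [← huv]; ring
      rw [h9, hself v]
      apply Prod.ext <;> push_cast <;> simp
    rwa [← hu, ← hself v] at hadj
  have key2 : ∀ u v : ZMod (2 * p) × ZMod (2 * q), u - v = (0, 1) →
      (tanner a b).Adj (φ₀ u) (φ₀ v) := by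
    intro u v huv
    have hadj := Fmap_adj_up a b i j g h (v.1.val : ℤ) (v.2.val : ℤ)
    rw [← hφ, ← hφ] at hadj
    have hu : u = (((v.1.val : ℤ) : ZMod (2 * p)), (((v.2.val : ℤ) + 1 : ℤ) : ZMod (2 * q))) := by
      have h9 : u = v + (0, 1) := by rw [← huv]; ring
      rw [h9, hself v]
      apply Prod.ext <;> push_cast <;> simp
    rwa [← hu, ← hself v] at hadj
  rintro u v ⟨hne, hc | hc | hc | hc⟩
  · exact key1 u v hc
  · refine ((tanner a b).adj_symm (key1 v u ?_))
    have : v - u = -(u - v) := (neg_sub u v).symm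
    rw [this, hc]
    apply Prod.ext <;> simp
  · exact key2 u v hc
  · refine ((tanner a b).adj_symm (key2 v u ?_))
    have : v - u = -(u - v) := (neg_sub u v).symm
    rw [this, hc]
    apply Prod.ext <;> simp

end ToricAux

theorem stmt6 (ℓ m : ℕ) (hℓ : 0 < ℓ) (hm : 0 < m)
    (a b : Fin 3 → ZMod ℓ × ZMod m)
    (ha : Function.Injective a) (hb : Function.Injective b)
    (i j g h : Fin 3)
    (hgen : AddSubgroup.closure ({a i - a j, b g - b h} : Set (ZMod ℓ × ZMod m)) = ⊤)
    (hord : addOrderOf (a i - a j) * addOrderOf (b g - b h) = ℓ * m) :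
    ∃ φ : ZMod (2 * addOrderOf (a i - a j)) × ZMod (2 * addOrderOf (b g - b h)) ≃
        Kind × (ZMod ℓ × ZMod m),
      ∀ u v, (cayley (2 * addOrderOf (a i - a j)) (2 * addOrderOf (b g - b h))).Adj u v →
        (tanner a b).Adj (φ u) (φ v) := by
  haveI : NeZero ℓ := ⟨hℓ.ne'⟩
  haveI : NeZero m := ⟨hm.ne'⟩
  exact ToricAux.toric a b i j g h hgen
    (by rw [Fintype.card_prod, ZMod.card, ZMod.card]; exact hord)
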